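/- arXiv:2210.13083 — 6 statements merged into one kernel-verified Lean document; each statement's English description precedes it below -/
import Mathlib

section
/- Let x ≥ 1 and c₁, c₂, c₃, c₄ ≥ 0 be real numbers such that x ≤ c₁ + c₂·√x + c₃·√(x·log x) + c₄·log x, where log is the natural logarithm. Then x ≤ (c₁ + c₂ + √2·c₃ + 2·c₄)⁴. -/
/-- Crude bound: if `x ≤ c₁ + c₂√x + c₃√(x log x) + c₄ log x` with `x ≥ 1` and
nonnegative constants, then `x ≤ (c₁ + c₂ + √2 c₃ + 2c₄)⁴`. -/
theorem crude_log_sqrt_bound (x c₁ c₂ c₃ c₄ : ℝ) (hx : 1 ≤ x)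
    (h₁ : 0 ≤ c₁) (h₂ : 0 ≤ c₂) (h₃ : 0 ≤ c₃) (h₄ : 0 ≤ c₄)
    (h : x ≤ c₁ + c₂ * Real.sqrt x + c₃ * Real.sqrt (x * Real.log x) + c₄ * Real.log x) :
    x ≤ (c₁ + c₂ + Real.sqrt 2 * c₃ + 2 * c₄) ^ 4 := by
  have hx0 : (0:ℝ) ≤ x := by linarith
  set s := Real.sqrt x with hs_def
  have hs1 : 1 ≤ s := by
    rw [hs_def, show (1:ℝ) = Real.sqrt 1 by simp]
    exact Real.sqrt_le_sqrt hx
  have hs0 : 0 ≤ s := by linarith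
  have hsx : s ^ 2 = x := Real.sq_sqrt hx0
  set t := Real.sqrt s with ht_def
  have ht1 : 1 ≤ t := by
    rw [ht_def, show (1:ℝ) = Real.sqrt 1 by simp]
    exact Real.sqrt_le_sqrt hs1
  have ht0 : 0 ≤ t := by linarith
  have hts : t ^ 2 = s := Real.sq_sqrt hs0
  have htx : t ^ 4 = x := by
    rw [← hsx, ← hts]; ring
  -- log x ≤ 2 s
  have hlog : Real.log x ≤ 2 * s := by
    have : Real.log x = 2 * Real.log s := by
      rw [← hsx, Real.log_pow]; push_cast; ring
    rw [this]
    have := Real.log_le_sub_one_of_pos (by linarith : (0:ℝ) < s)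
    linarith
  have hlog0 : 0 ≤ Real.log x := Real.log_nonneg hx
  -- sqrt (x log x) ≤ √2 * t^3
  have hsq : Real.sqrt (x * Real.log x) ≤ Real.sqrt 2 * t ^ 3 := by
    have h1 : x * Real.log x ≤ 2 * t ^ 6 := by
      have : x * Real.log x ≤ x * (2 * s) := by
        exact mul_le_mul_of_nonneg_left hlog hx0
      calc x * Real.log x ≤ x * (2 * s) := this
        _ = 2 * t ^ 6 := by rw [← htx, ← hts]; ring
    calc Real.sqrt (x * Real.log x) ≤ Real.sqrt (2 * t ^ 6) := Real.sqrt_le_sqrt h1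
      _ = Real.sqrt 2 * t ^ 3 := by
          rw [show t ^ 6 = (t ^ 3) ^ 2 by ring, Real.sqrt_mul (by norm_num) _,
            Real.sqrt_sq (by positivity)]
  -- main inequality: t^4 ≤ C t^3
  set C := c₁ + c₂ + Real.sqrt 2 * c₃ + 2 * c₄ with hC
  have key : t ^ 4 ≤ C * t ^ 3 := by
    have e1 : c₁ ≤ c₁ * t ^ 3 := le_mul_of_one_le_right h₁ (by nlinarith)
    have htt : t ^ 2 ≤ t ^ 3 := by nlinarith
    have e2 : c₂ * s ≤ c₂ * t ^ 3 := by
      rw [← hts]; exact mul_le_mul_of_nonneg_left htt h₂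
    have e3 : c₃ * Real.sqrt (x * Real.log x) ≤ c₃ * (Real.sqrt 2 * t ^ 3) :=
      mul_le_mul_of_nonneg_left hsq h₃
    have e4 : c₄ * Real.log x ≤ c₄ * (2 * t ^ 3) := by
      have : Real.log x ≤ 2 * t ^ 3 := by rw [← hts] at hlog; nlinarith
      exact mul_le_mul_of_nonneg_left this h₄
    have hxle : x ≤ (c₁ + c₂ + Real.sqrt 2 * c₃ + 2 * c₄) * t ^ 3 := by nlinarith [h, e1, e2, e3, e4]
    rw [htx]; rw [hC]; exact hxle
  have ht3 : (0:ℝ) < t ^ 3 := by positivity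
  have htC : t ≤ C := by
    nlinarith [key, ht3]
  calc x = t ^ 4 := htx.symm
    _ ≤ C ^ 4 := pow_le_pow_left₀ ht0 htC 4
end

section
/- Let x ≥ 1 and c₁, c₂, c₃, c₄ ≥ 0 be real numbers such that x ≤ c₁ + c₂·√x + c₃·√(x·log x) + c₄·log x, where log is the natural logarithm. Set C := max{(c₁ + c₂ + √2·c₃ + 2·c₄)⁴, 1}. Then x ≤ (c₂ + c₃·√(log C))² + 2·c₁ + 2·c₄·log C. -/
/-- Refined bound: if `x ≤ c₁ + c₂√x + c₃√(x log x) + c₄ log x` with `x ≥ 1`, then with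
`C := max ((c₁ + c₂ + √2 c₃ + 2c₄)⁴) 1` one has
`x ≤ (c₂ + c₃ √(log C))² + 2c₁ + 2c₄ log C`. -/
theorem refined_log_sqrt_bound (x c₁ c₂ c₃ c₄ : ℝ) (hx : 1 ≤ x)
    (h₁ : 0 ≤ c₁) (h₂ : 0 ≤ c₂) (h₃ : 0 ≤ c₃) (h₄ : 0 ≤ c₄)
    (h : x ≤ c₁ + c₂ * Real.sqrt x + c₃ * Real.sqrt (x * Real.log x) + c₄ * Real.log x) :
    x ≤ (c₂ + c₃ * Real.sqrt (Real.log (max ((c₁ + c₂ + Real.sqrt 2 * c₃ + 2 * c₄) ^ 4) 1))) ^ 2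
        + 2 * c₁ + 2 * c₄ * Real.log (max ((c₁ + c₂ + Real.sqrt 2 * c₃ + 2 * c₄) ^ 4) 1) := by
  have hx0 : (0:ℝ) < x := lt_of_lt_of_le zero_lt_one hx
  have hlogx : 0 ≤ Real.log x := Real.log_nonneg hx
  set s := Real.sqrt x with hsdef
  set t := Real.sqrt s with htdef
  have hs1 : 1 ≤ s := Real.one_le_sqrt.mpr hx
  have ht1 : 1 ≤ t := Real.one_le_sqrt.mpr hs1
  have ht0 : 0 ≤ t := le_trans zero_le_one ht1
  have hts : t ^ 2 = s := Real.sq_sqrt (le_trans zero_le_one hs1)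
  have hsx : s ^ 2 = x := Real.sq_sqrt hx0.le
  have htx : t ^ 4 = x := by
    rw [show (4:ℕ) = 2 * 2 from rfl, pow_mul, hts, hsx]
  have hlog2s : Real.log x ≤ 2 * s := by
    have h1 : Real.log s ≤ s - 1 := Real.log_le_sub_one_of_pos (lt_of_lt_of_le zero_lt_one hs1)
    have h2 : Real.log x = 2 * Real.log s := by
      rw [hsdef, Real.log_sqrt hx0.le]; ring
    linarith
  have hxlog : Real.sqrt (x * Real.log x) ≤ Real.sqrt 2 * t ^ 3 := by
    have := Real.sqrt_mul hx0.le (Real.log x)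
    rw [this]
    have h1 : Real.sqrt (Real.log x) ≤ Real.sqrt (2 * s) := Real.sqrt_le_sqrt hlog2s
    have h2 : Real.sqrt (2 * s) = Real.sqrt 2 * t := by
      rw [Real.sqrt_mul (by norm_num : (0:ℝ) ≤ 2)]
    calc s * Real.sqrt (Real.log x) ≤ s * (Real.sqrt 2 * t) := by
          apply mul_le_mul_of_nonneg_left _ (le_trans zero_le_one hs1)
          rw [← h2]; exact h1
      _ = Real.sqrt 2 * t ^ 3 := by rw [← hts]; ring
  -- Step 1: x ≤ C
  set S := c₁ + c₂ + Real.sqrt 2 * c₃ + 2 * c₄ with hSdef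
  have hS0 : 0 ≤ S := by
    have : (0:ℝ) ≤ Real.sqrt 2 := Real.sqrt_nonneg 2
    positivity
  have hkey : t ^ 4 ≤ S * t ^ 3 := by
    have hc1 : c₁ ≤ c₁ * t ^ 3 := le_mul_of_one_le_right h₁ (one_le_pow₀ ht1)
    have hc2 : c₂ * s ≤ c₂ * t ^ 3 := by
      rw [← hts]
      apply mul_le_mul_of_nonneg_left _ h₂
      exact pow_le_pow_right₀ ht1 (by norm_num)
    have hc3 : c₃ * Real.sqrt (x * Real.log x) ≤ c₃ * (Real.sqrt 2 * t ^ 3) :=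
      mul_le_mul_of_nonneg_left hxlog h₃
    have hc4 : c₄ * Real.log x ≤ c₄ * (2 * t ^ 3) := by
      apply mul_le_mul_of_nonneg_left _ h₄
      have : s ≤ t ^ 3 := by
        rw [← hts]; exact pow_le_pow_right₀ ht1 (by norm_num)
      linarith
    have hx' := h
    rw [htx, hSdef]
    nlinarith [hx']
  have htS : t ≤ S := by
    have ht3 : (1:ℝ) ≤ t ^ 3 := one_le_pow₀ ht1
    nlinarith
  have hxC : x ≤ max (S ^ 4) 1 := by
    calc x = t ^ 4 := htx.symm
      _ ≤ S ^ 4 := pow_le_pow_left₀ ht0 htS 4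
      _ ≤ max (S ^ 4) 1 := le_max_left _ _
  -- Step 2: conclude
  set C := max (S ^ 4) 1 with hCdef
  have hC1 : (1:ℝ) ≤ C := le_max_right _ _
  have hL0 : 0 ≤ Real.log C := Real.log_nonneg hC1
  have hlogle : Real.log x ≤ Real.log C := Real.log_le_log hx0 hxC
  set L := Real.log C with hLdef
  have hsqL : Real.sqrt (x * Real.log x) ≤ s * Real.sqrt L := by
    rw [Real.sqrt_mul hx0.le]
    exact mul_le_mul_of_nonneg_left (Real.sqrt_le_sqrt hlogle) (le_trans zero_le_one hs1)
  have hb0 : 0 ≤ c₂ + c₃ * Real.sqrt L := by positivity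
  have hmain : x ≤ c₁ + (c₂ + c₃ * Real.sqrt L) * s + c₄ * L := by
    nlinarith [h, hsqL, hlogle, mul_le_mul_of_nonneg_left hsqL h₃]
  have hamgm : 2 * ((c₂ + c₃ * Real.sqrt L) * s) ≤ (c₂ + c₃ * Real.sqrt L) ^ 2 + x := by
    nlinarith [sq_nonneg (c₂ + c₃ * Real.sqrt L - s), hsx]
  linarith
end

section
/- Let 𝒜 be a finite set, φ : 𝒜 → ℝ^d, V a symmetric positive definite real d×d matrix, β ≥ 0, and θ̂, θ* ∈ ℝ^d with ‖θ̂ − θ*‖_V ≤ β. Let â ∈ 𝒜 be a maximizer of a ↦ φ(a)ᵀθ̂. If for every a ∈ 𝒜 with a ≠ â one has (φ(â) − φ(a))ᵀ θ̂ > β · ‖φ(â) − φ(a)‖_{V⁻¹}, then for every a ∈ 𝒜 with a ≠ â one has φ(â)ᵀθ* > φ(a)ᵀθ*. -/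
open Matrix

/-- The `V`-weighted norm `‖u‖_V := √(uᵀ V u)`. -/
noncomputable def matNorm {d : ℕ} (V : Matrix (Fin d) (Fin d) ℝ) (u : Fin d → ℝ) : ℝ :=
  Real.sqrt (u ⬝ᵥ V *ᵥ u)

/-- Cauchy–Schwarz for the pairing `x ⬝ᵥ w ≤ ‖x‖_{V⁻¹} ‖w‖_V`. -/
lemma matNorm_cauchy_schwarz {d : ℕ} (V : Matrix (Fin d) (Fin d) ℝ) (hV : V.PosDef)
    (x w : Fin d → ℝ) : x ⬝ᵥ w ≤ matNorm V⁻¹ x * matNorm V w := by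
  set a := w ⬝ᵥ V *ᵥ w with ha
  set c := x ⬝ᵥ V⁻¹ *ᵥ x with hc
  have ha0 : 0 ≤ a := hV.posSemidef.dotProduct_mulVec_nonneg w
  have hc0 : 0 ≤ c := hV.inv.posSemidef.dotProduct_mulVec_nonneg x
  have hdet : IsUnit V.det := isUnit_iff_ne_zero.mpr hV.det_pos.ne'
  have hsymm : Vᵀ = V := hV.isHermitian
  have hinv : V⁻¹ *ᵥ (V *ᵥ w) = w := by
    rw [mulVec_mulVec, nonsing_inv_mul V hdet, one_mulVec]
  have hinv2 : V *ᵥ (V⁻¹ *ᵥ x) = x := by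
    rw [mulVec_mulVec, mul_nonsing_inv V hdet, one_mulVec]
  have key : ∀ t : ℝ, 0 ≤ a * (t * t) + (-2 * (x ⬝ᵥ w)) * t + c := by
    intro t
    have h0 : 0 ≤ (x - t • (V *ᵥ w)) ⬝ᵥ V⁻¹ *ᵥ (x - t • (V *ᵥ w)) :=
      hV.inv.posSemidef.dotProduct_mulVec_nonneg _
    have e1 : x ⬝ᵥ V⁻¹ *ᵥ (V *ᵥ w) = x ⬝ᵥ w := by rw [hinv]
    have e2 : (V *ᵥ w) ⬝ᵥ V⁻¹ *ᵥ x = x ⬝ᵥ w := by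
      rw [dotProduct_comm, dotProduct_mulVec, ← mulVec_transpose, hsymm, hinv2]
    have e3 : (V *ᵥ w) ⬝ᵥ V⁻¹ *ᵥ (V *ᵥ w) = a := by
      rw [hinv, ha, dotProduct_comm]
    calc (0:ℝ) ≤ (x - t • (V *ᵥ w)) ⬝ᵥ V⁻¹ *ᵥ (x - t • (V *ᵥ w)) := h0
    _ = a * (t * t) + (-2 * (x ⬝ᵥ w)) * t + c := by
        rw [mulVec_sub, mulVec_smul, sub_dotProduct, smul_dotProduct,
          dotProduct_sub, dotProduct_smul, dotProduct_sub, dotProduct_smul,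
          e1, e2, e3, ← hc]
        simp only [smul_eq_mul]
        ring
  have hd := discrim_le_zero key
  rw [discrim] at hd
  have hsq : (x ⬝ᵥ w) ^ 2 ≤ a * c := by nlinarith
  have : x ⬝ᵥ w ≤ Real.sqrt (a * c) := by
    calc x ⬝ᵥ w ≤ |x ⬝ᵥ w| := le_abs_self _
    _ = Real.sqrt ((x ⬝ᵥ w) ^ 2) := (Real.sqrt_sq_eq_abs _).symm
    _ ≤ Real.sqrt (a * c) := Real.sqrt_le_sqrt hsq
  calc x ⬝ᵥ w ≤ Real.sqrt (a * c) := this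
  _ = Real.sqrt c * Real.sqrt a := by
      rw [Real.sqrt_mul ha0, mul_comm]
  _ = matNorm V⁻¹ x * matNorm V w := rfl

/-- Correctness of the GLR test: if `‖θ̂ − θ*‖_V ≤ β` and, for every action `a ≠ â`,
`(φ(â) − φ(a))ᵀθ̂ > β ‖φ(â) − φ(a)‖_{V⁻¹}`, then `â` (the empirical maximizer) is also
the maximizer under `θ*`. -/
theorem glrt_correct {A : Type*} [Fintype A] {d : ℕ}
    (φ : A → (Fin d → ℝ)) (V : Matrix (Fin d) (Fin d) ℝ) (hV : V.PosDef)
    (β : ℝ) (hβ : 0 ≤ β) (θhat θstar : Fin d → ℝ)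
    (hconf : matNorm V (θhat - θstar) ≤ β)
    (ahat : A) (hmax : ∀ a, φ a ⬝ᵥ θhat ≤ φ ahat ⬝ᵥ θhat)
    (htest : ∀ a, a ≠ ahat → β * matNorm V⁻¹ (φ ahat - φ a) < (φ ahat - φ a) ⬝ᵥ θhat) :
    ∀ a, a ≠ ahat → φ a ⬝ᵥ θstar < φ ahat ⬝ᵥ θstar := by
  intro a hne
  set x := φ ahat - φ a with hx
  have hcs : x ⬝ᵥ (θhat - θstar) ≤ matNorm V⁻¹ x * matNorm V (θhat - θstar) :=
    matNorm_cauchy_schwarz V hV x _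
  have hnn : 0 ≤ matNorm V⁻¹ x := Real.sqrt_nonneg _
  have h2 : x ⬝ᵥ (θhat - θstar) ≤ matNorm V⁻¹ x * β :=
    hcs.trans (mul_le_mul_of_nonneg_left hconf hnn)
  have h3 := htest a hne
  have hsplit : x ⬝ᵥ (θhat - θstar) = x ⬝ᵥ θhat - x ⬝ᵥ θstar := dotProduct_sub x _ _
  have hsplit2 : x ⬝ᵥ θstar = φ ahat ⬝ᵥ θstar - φ a ⬝ᵥ θstar := by
    rw [hx, sub_dotProduct]
  nlinarith [hsplit, hsplit2]
end

section
/- Let V be a symmetric positive definite real d×d matrix, v ∈ ℝ^d with v ≠ 0, and θ̂ ∈ ℝ^d with vᵀθ̂ ≥ 0. Then inf{‖θ̂ − θ‖_V : θ ∈ ℝ^d, vᵀθ ≤ 0} = vᵀθ̂ / ‖v‖_{V⁻¹}. -/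
open Matrix

lemma symm_dot {d : ℕ} {V : Matrix (Fin d) (Fin d) ℝ} (hV : V.IsHermitian) (x y : Fin d → ℝ) :
    x ⬝ᵥ V *ᵥ y = y ⬝ᵥ V *ᵥ x := by
  rw [dotProduct_mulVec, ← mulVec_transpose, dotProduct_comm]
  congr 1
  rw [show Vᵀ = V from hV]

lemma cs {d : ℕ} {V : Matrix (Fin d) (Fin d) ℝ} (hV : V.PosDef) (x y : Fin d → ℝ) :
    (x ⬝ᵥ V *ᵥ y) ^ 2 ≤ (x ⬝ᵥ V *ᵥ x) * (y ⬝ᵥ V *ᵥ y) := by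
  set a := y ⬝ᵥ V *ᵥ y
  set b := x ⬝ᵥ V *ᵥ y
  set c := x ⬝ᵥ V *ᵥ x
  have key : ∀ t : ℝ, 0 ≤ a * (t * t) + (2 * b) * t + c := by
    intro t
    have h0 : 0 ≤ (x + t • y) ⬝ᵥ V *ᵥ (x + t • y) := by
      rcases eq_or_ne (x + t • y) 0 with h | h
      · simp [h]
      · exact le_of_lt (by simpa using hV.dotProduct_mulVec_pos h)
    have hexp : (x + t • y) ⬝ᵥ V *ᵥ (x + t • y) = a * (t * t) + (2 * b) * t + c := by
      simp only [mulVec_add, dotProduct_add, add_dotProduct, mulVec_smul, dotProduct_smul,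
        smul_dotProduct, smul_eq_mul]
      rw [symm_dot hV.isHermitian y x]
      ring
    linarith [hexp ▸ h0]
  have hd : discrim a (2 * b) c ≤ 0 := discrim_le_zero key
  rw [discrim] at hd
  nlinarith [hd]

/-- Closed form of the generalized likelihood ratio: for positive definite `V`, `v ≠ 0` and
`vᵀθ̂ ≥ 0`, `inf {‖θ̂ − θ‖_V : vᵀθ ≤ 0} = vᵀθ̂ / ‖v‖_{V⁻¹}`. -/
theorem glr_inf_eq {d : ℕ} (V : Matrix (Fin d) (Fin d) ℝ) (hV : V.PosDef)
    (v : Fin d → ℝ) (hv : v ≠ 0) (θhat : Fin d → ℝ) (hθ : 0 ≤ v ⬝ᵥ θhat) :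
    sInf ((fun θ : Fin d → ℝ => matNorm V (θhat - θ)) '' {θ | v ⬝ᵥ θ ≤ 0}) =
      v ⬝ᵥ θhat / matNorm V⁻¹ v := by
  have hVinv : V⁻¹.PosDef := hV.inv
  have hdet : IsUnit V.det := isUnit_iff_ne_zero.2 hV.det_pos.ne'
  have hVV : V * V⁻¹ = 1 := mul_nonsing_inv V hdet
  set N2 : ℝ := v ⬝ᵥ V⁻¹ *ᵥ v with hN2def
  have hN2 : 0 < N2 := by simpa using hVinv.dotProduct_mulVec_pos hv
  set N : ℝ := Real.sqrt N2 with hNdef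
  have hN : 0 < N := Real.sqrt_pos.2 hN2
  have hNsq : N ^ 2 = N2 := Real.sq_sqrt hN2.le
  have hmatN : matNorm V⁻¹ v = N := rfl
  -- key identities
  have hkey1 : ∀ u : Fin d → ℝ, (V⁻¹ *ᵥ v) ⬝ᵥ V *ᵥ u = v ⬝ᵥ u := by
    intro u
    rw [symm_dot hV.isHermitian, mulVec_mulVec, hVV, one_mulVec, dotProduct_comm]
  have hkey2 : (V⁻¹ *ᵥ v) ⬝ᵥ V *ᵥ (V⁻¹ *ᵥ v) = N2 := by
    rw [hkey1]
  -- Cauchy-Schwarz consequence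
  have hCS : ∀ u : Fin d → ℝ, (v ⬝ᵥ u) ^ 2 ≤ N2 * (u ⬝ᵥ V *ᵥ u) := by
    intro u
    have := cs hV (V⁻¹ *ᵥ v) u
    rwa [hkey1, hkey2] at this
  have hqnn : ∀ u : Fin d → ℝ, 0 ≤ u ⬝ᵥ V *ᵥ u := by
    intro u
    rcases eq_or_ne u 0 with h | h
    · simp [h]
    · exact le_of_lt (by simpa using hV.dotProduct_mulVec_pos h)
  -- lower bound
  have hlb : ∀ s ∈ (fun θ : Fin d → ℝ => matNorm V (θhat - θ)) '' {θ | v ⬝ᵥ θ ≤ 0},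
      v ⬝ᵥ θhat / N ≤ s := by
    rintro s ⟨θ, hθ0, rfl⟩
    set u := θhat - θ with hu
    have hθ0' : v ⬝ᵥ θ ≤ 0 := hθ0
    have hvu : v ⬝ᵥ θhat ≤ v ⬝ᵥ u := by
      rw [hu, dotProduct_sub]
      linarith
    set m : ℝ := Real.sqrt (u ⬝ᵥ V *ᵥ u) with hm
    have hm0 : 0 ≤ m := Real.sqrt_nonneg _
    have hm2 : m ^ 2 = u ⬝ᵥ V *ᵥ u := Real.sq_sqrt (hqnn u)
    have h1 : (v ⬝ᵥ u) ^ 2 ≤ (N * m) ^ 2 := by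
      rw [mul_pow, hNsq, hm2]; exact hCS u
    have h2 : v ⬝ᵥ u ≤ N * m := by
      nlinarith [hvu, hθ, mul_nonneg hN.le hm0]
    show v ⬝ᵥ θhat / N ≤ m
    rw [div_le_iff₀ hN, mul_comm]
    linarith
  -- membership of the optimal point
  have hmem : v ⬝ᵥ θhat / N ∈ (fun θ : Fin d → ℝ => matNorm V (θhat - θ)) '' {θ | v ⬝ᵥ θ ≤ 0} := by
    refine ⟨θhat - (v ⬝ᵥ θhat / N2) • (V⁻¹ *ᵥ v), ?_, ?_⟩
    · show v ⬝ᵥ _ ≤ 0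
      rw [dotProduct_sub, dotProduct_smul, smul_eq_mul, ← hN2def,
        div_mul_cancel₀ _ hN2.ne']
      simp
    · show matNorm V (θhat - (θhat - (v ⬝ᵥ θhat / N2) • (V⁻¹ *ᵥ v))) = _
      have : θhat - (θhat - (v ⬝ᵥ θhat / N2) • (V⁻¹ *ᵥ v)) = (v ⬝ᵥ θhat / N2) • (V⁻¹ *ᵥ v) := by
        abel
      rw [this]
      set s : ℝ := v ⬝ᵥ θhat / N2 with hs
      have hs0 : 0 ≤ s := div_nonneg hθ hN2.le
      have hq : (s • (V⁻¹ *ᵥ v)) ⬝ᵥ V *ᵥ (s • (V⁻¹ *ᵥ v)) = s ^ 2 * N2 := by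
        rw [mulVec_smul, dotProduct_smul, smul_dotProduct, smul_eq_mul, smul_eq_mul, hkey2]
        ring
      rw [matNorm, hq, Real.sqrt_mul (sq_nonneg s), Real.sqrt_sq hs0, ← hNdef, hs]
      rw [← hNsq]
      field_simp
  have hne : ((fun θ : Fin d → ℝ => matNorm V (θhat - θ)) '' {θ | v ⬝ᵥ θ ≤ 0}).Nonempty :=
    ⟨_, hmem⟩
  have hbdd : BddBelow ((fun θ : Fin d → ℝ => matNorm V (θhat - θ)) '' {θ | v ⬝ᵥ θ ≤ 0}) :=
    ⟨0, by rintro s ⟨θ, _, rfl⟩; exact Real.sqrt_nonneg _⟩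
  rw [hmatN]
  exact le_antisymm (csInf_le hbdd hmem) (le_csInf hne hlb)
end

section
/- Let 𝒜 be a finite set with at least two elements, φ : 𝒜 → ℝ^d with ‖φ(a)‖₂ ≤ L for all a, where L > 0, and V a symmetric positive definite real d×d matrix with λ_min(V) ≥ Λ for some Λ > 0. Let θ* ∈ ℝ^d and suppose a* ∈ 𝒜 satisfies φ(a*)ᵀθ* − φ(a)ᵀθ* ≥ Δ for every a ≠ a*, where Δ > 0. Let θ̂ ∈ ℝ^d with ‖θ̂ − θ*‖_V ≤ β, and suppose 4·L·β ≤ Δ·√Λ. Then: (i) a* is the unique maximizer of a ↦ φ(a)ᵀθ̂ over 𝒜; and (ii) for every a ≠ a*, (φ(a*) − φ(a))ᵀθ̂ / ‖φ(a*) − φ(a)‖_{V⁻¹} ≥ (Δ/(4·L))·√Λ. -/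
open Matrix

section helpers
variable {d : ℕ} {V : Matrix (Fin d) (Fin d) ℝ}

lemma quadForm_nonneg (hV : V.PosDef) (u : Fin d → ℝ) : 0 ≤ u ⬝ᵥ V *ᵥ u := by
  simpa using hV.posSemidef.dotProduct_mulVec_nonneg u

lemma matNorm_nonneg (V : Matrix (Fin d) (Fin d) ℝ) (u : Fin d → ℝ) : 0 ≤ matNorm V u :=
  Real.sqrt_nonneg _

lemma matNorm_sq (hV : V.PosDef) (u : Fin d → ℝ) : matNorm V u ^ 2 = u ⬝ᵥ V *ᵥ u := by
  rw [matNorm, Real.sq_sqrt (quadForm_nonneg hV u)]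

lemma symm_swap (hV : V.PosDef) (x y : Fin d → ℝ) : y ⬝ᵥ V *ᵥ x = x ⬝ᵥ V *ᵥ y := by
  have hsym : ∀ i j, V i j = V j i := fun i j => by
    have := congrFun (congrFun hV.1 j) i
    simpa using this
  calc y ⬝ᵥ V *ᵥ x = ∑ i, ∑ j, y i * (V i j * x j) := by
        simp [dotProduct, mulVec, Finset.mul_sum]
    _ = ∑ j, ∑ i, y i * (V i j * x j) := Finset.sum_comm
    _ = x ⬝ᵥ V *ᵥ y := by
        simp only [dotProduct, mulVec, Finset.mul_sum]
        refine Finset.sum_congr rfl fun j _ => Finset.sum_congr rfl fun i _ => ?_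
        rw [hsym i j]; ring

lemma cs_weighted (hV : V.PosDef) (x y : Fin d → ℝ) :
    x ⬝ᵥ V *ᵥ y ≤ matNorm V x * matNorm V y := by
  set a := y ⬝ᵥ V *ᵥ y with ha
  set b := x ⬝ᵥ V *ᵥ y with hb
  set c := x ⬝ᵥ V *ᵥ x with hc
  have key := discrim_le_zero (a := a) (b := 2 * b) (c := c) (fun t => by
    have h0 := quadForm_nonneg hV (x + t • y)
    have hexp : (x + t • y) ⬝ᵥ V *ᵥ (x + t • y) = a * (t * t) + 2 * b * t + c := by
      simp only [mulVec_add, mulVec_smul, dotProduct_add, add_dotProduct,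
        dotProduct_smul, smul_dotProduct, smul_eq_mul, ← ha, ← hb, ← hc]
      rw [symm_swap hV x y, ← hb]
      ring
    linarith [hexp ▸ h0])
  have hb2 : b ^ 2 ≤ c * a := by
    simp only [discrim] at key; nlinarith
  calc b ≤ |b| := le_abs_self b
    _ = Real.sqrt (b ^ 2) := (Real.sqrt_sq_eq_abs b).symm
    _ ≤ Real.sqrt (c * a) := Real.sqrt_le_sqrt hb2
    _ = matNorm V x * matNorm V y := by
        rw [Real.sqrt_mul (quadForm_nonneg hV x)]; rfl

lemma eig_lb (hV : V.PosDef) {Λ : ℝ}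
    (hΛ : ∀ i, Λ ≤ hV.isHermitian.eigenvalues i) (u : Fin d → ℝ) :
    Λ * (u ⬝ᵥ u) ≤ u ⬝ᵥ V *ᵥ u := by
  have hH := hV.isHermitian
  set U : Matrix (Fin d) (Fin d) ℝ := (IsHermitian.eigenvectorUnitary hH : Matrix (Fin d) (Fin d) ℝ) with hUdef
  have hunit : U * star U = 1 := mem_unitaryGroup_iff.mp (IsHermitian.eigenvectorUnitary hH).2
  set w : Fin d → ℝ := star U *ᵥ u with hw
  have key : u ⬝ᵥ V *ᵥ u = ∑ i, hH.eigenvalues i * w i ^ 2 := by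
    conv_lhs => rw [hH.spectral_theorem, Unitary.conjStarAlgAut_apply]
    rw [← mulVec_mulVec, ← mulVec_mulVec, dotProduct_mulVec]
    have hvm : u ᵥ* U = w := by
      ext i
      simp [vecMul, mulVec, dotProduct, hw, Matrix.star_apply, mul_comm]
    rw [hvm]
    simp only [dotProduct, mulVec_diagonal, Function.comp_apply, RCLike.ofReal_real_eq_id, id_eq, ← hw]
    exact Finset.sum_congr rfl fun i _ => by ring
  have hww : w ⬝ᵥ w = u ⬝ᵥ u := by
    calc w ⬝ᵥ w = (u ᵥ* U) ⬝ᵥ (star U *ᵥ u) := by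
          rw [hw]; congr 1
          ext i; simp [vecMul, mulVec, dotProduct, Matrix.star_apply, mul_comm]
      _ = ((u ᵥ* U) ᵥ* star U) ⬝ᵥ u := dotProduct_mulVec _ _ _
      _ = (u ᵥ* (U * star U)) ⬝ᵥ u := by rw [vecMul_vecMul]
      _ = u ⬝ᵥ u := by rw [hunit, vecMul_one]
  calc Λ * (u ⬝ᵥ u) = ∑ i, Λ * w i ^ 2 := by
        rw [← hww]; simp [dotProduct, Finset.mul_sum, sq]
    _ ≤ ∑ i, hH.eigenvalues i * w i ^ 2 :=
        Finset.sum_le_sum fun i _ => mul_le_mul_of_nonneg_right (hΛ i) (sq_nonneg _)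
    _ = u ⬝ᵥ V *ᵥ u := key.symm

lemma inv_mulVec_self (hV : V.PosDef) (x : Fin d → ℝ) :
    V *ᵥ (V⁻¹ *ᵥ x) = x := by
  rw [mulVec_mulVec, Matrix.mul_nonsing_inv _ (isUnit_iff_ne_zero.mpr hV.det_pos.ne'),
    one_mulVec]

lemma cs_mixed (hV : V.PosDef) (x y : Fin d → ℝ) :
    x ⬝ᵥ y ≤ matNorm V⁻¹ x * matNorm V y := by
  set p := V⁻¹ *ᵥ x with hp
  have hpx : p ⬝ᵥ V *ᵥ y = x ⬝ᵥ y := by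
    rw [symm_swap hV y p, hp, inv_mulVec_self hV, dotProduct_comm]
  have hpn : matNorm V p = matNorm V⁻¹ x := by
    unfold matNorm
    congr 1
    rw [symm_swap hV p p]
    conv_lhs => rw [hp, inv_mulVec_self hV]
    rw [dotProduct_comm]
  calc x ⬝ᵥ y = p ⬝ᵥ V *ᵥ y := hpx.symm
    _ ≤ matNorm V p * matNorm V y := cs_weighted hV p y
    _ = matNorm V⁻¹ x * matNorm V y := by rw [hpn]

lemma dot_self_nonneg (u : Fin d → ℝ) : 0 ≤ u ⬝ᵥ u :=
  Finset.sum_nonneg fun i _ => mul_self_nonneg _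

lemma matNorm_one (u : Fin d → ℝ) : matNorm 1 u = Real.sqrt (u ⬝ᵥ u) := by
  simp [matNorm]

lemma inv_quad_le (hV : V.PosDef) {Λ : ℝ} (hΛpos : 0 < Λ)
    (hΛ : ∀ i, Λ ≤ hV.isHermitian.eigenvalues i) (x : Fin d → ℝ) :
    x ⬝ᵥ V⁻¹ *ᵥ x ≤ (x ⬝ᵥ x) / Λ := by
  set y := V⁻¹ *ᵥ x with hy
  have hxy : x ⬝ᵥ V⁻¹ *ᵥ x = y ⬝ᵥ V *ᵥ y := by
    rw [symm_swap hV y y]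
    conv_lhs => rw [show V⁻¹ *ᵥ x = y from rfl]
    conv_rhs => rw [hy, inv_mulVec_self hV]
    rw [dotProduct_comm]
  have h1 : Λ * (y ⬝ᵥ y) ≤ y ⬝ᵥ V *ᵥ y := eig_lb hV hΛ y
  have h2 : y ⬝ᵥ V *ᵥ y = x ⬝ᵥ y := by
    rw [symm_swap hV y y]
    conv_lhs => rw [hy, inv_mulVec_self hV]
    rw [dotProduct_comm, ← hy]
  have hcs : x ⬝ᵥ y ≤ Real.sqrt (x ⬝ᵥ x) * Real.sqrt (y ⬝ᵥ y) := by
    have := cs_weighted (Matrix.PosDef.one (n := Fin d) (R := ℝ)) x y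
    simpa [matNorm_one, one_mulVec] using this
  set s := Real.sqrt (y ⬝ᵥ y) with hs
  set t := Real.sqrt (x ⬝ᵥ x) with ht
  have hs0 : 0 ≤ s := Real.sqrt_nonneg _
  have ht0 : 0 ≤ t := Real.sqrt_nonneg _
  have hss : s ^ 2 = y ⬝ᵥ y := Real.sq_sqrt (dot_self_nonneg y)
  have htt : t ^ 2 = x ⬝ᵥ x := Real.sq_sqrt (dot_self_nonneg x)
  rw [hxy, h2, ← htt]
  rw [le_div_iff₀ hΛpos]
  have h1' : Λ * (y ⬝ᵥ y) ≤ x ⬝ᵥ y := h2 ▸ h1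
  have key : Λ * (s ^ 2) ≤ t * s := by rw [hss]; linarith
  nlinarith [sq_nonneg (t - Λ * s), mul_le_mul_of_nonneg_left key hΛpos.le,
    mul_le_mul_of_nonneg_left hcs hΛpos.le]
end helpers

lemma matNorm_neg {d : ℕ} (V : Matrix (Fin d) (Fin d) ℝ) (u : Fin d → ℝ) :
    matNorm V (-u) = matNorm V u := by
  unfold matNorm
  rw [mulVec_neg, neg_dotProduct, dotProduct_neg, neg_neg]

/-- If features are `L`-bounded, `λ_min(V) ≥ Λ`, the gap of `a*` under `θ*` is at least `Δ`,
`‖θ̂ − θ*‖_V ≤ β`, and `4Lβ ≤ Δ√Λ`, then `a*` is the unique empirical maximizer and the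
GLR statistic of every other action is at least `(Δ/(4L))√Λ`. -/
theorem glrt_trigger {A : Type*} [Fintype A] (hcard : 2 ≤ Fintype.card A)
    {d : ℕ} (φ : A → (Fin d → ℝ)) (L : ℝ) (hL : 0 < L)
    (hφ : ∀ a, Real.sqrt (∑ i, φ a i ^ 2) ≤ L)
    (V : Matrix (Fin d) (Fin d) ℝ) (hV : V.PosDef)
    (Λ : ℝ) (hΛpos : 0 < Λ) (hΛ : ∀ i, Λ ≤ hV.isHermitian.eigenvalues i)
    (θstar : Fin d → ℝ) (astar : A) (Δ : ℝ) (hΔ : 0 < Δ)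
    (hgap : ∀ a, a ≠ astar → Δ ≤ φ astar ⬝ᵥ θstar - φ a ⬝ᵥ θstar)
    (θhat : Fin d → ℝ) (β : ℝ) (hconf : matNorm V (θhat - θstar) ≤ β)
    (hsep : 4 * L * β ≤ Δ * Real.sqrt Λ) :
    (∀ a, a ≠ astar → φ a ⬝ᵥ θhat < φ astar ⬝ᵥ θhat) ∧
    (∀ a, a ≠ astar →
      Δ / (4 * L) * Real.sqrt Λ ≤
        (φ astar - φ a) ⬝ᵥ θhat / matNorm V⁻¹ (φ astar - φ a)) := by
  have sΛpos : 0 < Real.sqrt Λ := Real.sqrt_pos.mpr hΛpos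
  have hβ0 : 0 ≤ β := le_trans (matNorm_nonneg V _) hconf
  have hφ2 : ∀ b : A, φ b ⬝ᵥ φ b ≤ L ^ 2 := fun b => by
    have hs : Real.sqrt (φ b ⬝ᵥ φ b) ≤ L := by
      have h := hφ b
      have : (∑ i, φ b i ^ 2) = φ b ⬝ᵥ φ b := by simp [dotProduct, sq]
      rwa [this] at h
    calc φ b ⬝ᵥ φ b = (Real.sqrt (φ b ⬝ᵥ φ b)) ^ 2 := (Real.sq_sqrt (dot_self_nonneg _)).symm
      _ ≤ L ^ 2 := pow_le_pow_left₀ (Real.sqrt_nonneg _) hs 2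
  have main : ∀ a, a ≠ astar → (Δ / 2 ≤ (φ astar - φ a) ⬝ᵥ θhat ∧
      0 < matNorm V⁻¹ (φ astar - φ a) ∧
      matNorm V⁻¹ (φ astar - φ a) ≤ 2 * L / Real.sqrt Λ) := by
    intro a ha
    set x := φ astar - φ a with hx
    have h1 : Δ ≤ x ⬝ᵥ θstar := by
      rw [hx, sub_dotProduct]; exact hgap a ha
    have hab : -(φ astar ⬝ᵥ φ a) ≤ L ^ 2 := by
      have hcs := cs_weighted (Matrix.PosDef.one (n := Fin d) (R := ℝ)) (φ astar) (-(φ a))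
      rw [one_mulVec, dotProduct_neg, matNorm_neg] at hcs
      have hsa : matNorm 1 (φ astar) ≤ L := by
        rw [matNorm_one]
        have h := hφ astar
        have heq : (∑ i, φ astar i ^ 2) = φ astar ⬝ᵥ φ astar := by simp [dotProduct, sq]
        rwa [heq] at h
      have hsb : matNorm 1 (φ a) ≤ L := by
        rw [matNorm_one]
        have h := hφ a
        have heq : (∑ i, φ a i ^ 2) = φ a ⬝ᵥ φ a := by simp [dotProduct, sq]
        rwa [heq] at h
      have := mul_le_mul hsa hsb (matNorm_nonneg _ _) hL.le
      calc -(φ astar ⬝ᵥ φ a) ≤ matNorm 1 (φ astar) * matNorm 1 (φ a) := hcs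
        _ ≤ L * L := this
        _ = L ^ 2 := (sq L).symm
    have hxx : x ⬝ᵥ x ≤ (2 * L) ^ 2 := by
      have hexp : x ⬝ᵥ x = φ astar ⬝ᵥ φ astar - 2 * (φ astar ⬝ᵥ φ a) + φ a ⬝ᵥ φ a := by
        rw [hx, sub_dotProduct, dotProduct_sub, dotProduct_sub,
          dotProduct_comm (φ a) (φ astar)]
        ring
      nlinarith [hφ2 astar, hφ2 a, hab, hL]
    have hVinv : (V⁻¹).PosDef := hV.inv
    have hn0 : 0 ≤ matNorm V⁻¹ x := matNorm_nonneg _ _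
    have hn2 : matNorm V⁻¹ x ^ 2 ≤ (2 * L) ^ 2 / Λ := by
      rw [matNorm_sq hVinv]
      calc x ⬝ᵥ V⁻¹ *ᵥ x ≤ (x ⬝ᵥ x) / Λ := inv_quad_le hV hΛpos hΛ x
        _ ≤ (2 * L) ^ 2 / Λ := by gcongr
    have hnle : matNorm V⁻¹ x ≤ 2 * L / Real.sqrt Λ := by
      have hc : (2 * L / Real.sqrt Λ) ^ 2 = (2 * L) ^ 2 / Λ := by
        rw [div_pow, Real.sq_sqrt hΛpos.le]
      have hcpos : 0 < 2 * L / Real.sqrt Λ := by positivity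
      nlinarith [hn0, hn2, hc, hcpos]
    have hx0 : x ≠ 0 := by
      intro h0
      rw [h0, zero_dotProduct] at h1
      linarith
    have hnpos : 0 < matNorm V⁻¹ x := by
      rw [matNorm]
      apply Real.sqrt_pos.mpr
      simpa using hVinv.dotProduct_mulVec_pos hx0
    have hcsm : x ⬝ᵥ (θstar - θhat) ≤ matNorm V⁻¹ x * β := by
      calc x ⬝ᵥ (θstar - θhat) ≤ matNorm V⁻¹ x * matNorm V (θstar - θhat) :=
            cs_mixed hV x _
        _ = matNorm V⁻¹ x * matNorm V (θhat - θstar) := by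
            rw [show θstar - θhat = -(θhat - θstar) by ring, matNorm_neg]
        _ ≤ matNorm V⁻¹ x * β := mul_le_mul_of_nonneg_left hconf hn0
    have hmain : Δ / 2 ≤ x ⬝ᵥ θhat := by
      have hsplit : x ⬝ᵥ θhat = x ⬝ᵥ θstar - x ⬝ᵥ (θstar - θhat) := by
        rw [dotProduct_sub]; ring
      have hnb : matNorm V⁻¹ x * β ≤ Δ / 2 := by
        have hmb : matNorm V⁻¹ x * β ≤ (2 * L / Real.sqrt Λ) * β :=
          mul_le_mul_of_nonneg_right hnle hβ0
        have h2 : (2 * L / Real.sqrt Λ) * β ≤ Δ / 2 := by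
          rw [div_mul_eq_mul_div, div_le_div_iff₀ sΛpos two_pos]
          nlinarith [hsep]
        linarith
      rw [hsplit]
      linarith
    exact ⟨hmain, hnpos, hnle⟩
  constructor
  · intro a ha
    obtain ⟨h1, -, -⟩ := main a ha
    rw [sub_dotProduct] at h1
    linarith
  · intro a ha
    obtain ⟨h1, hnpos, hnle⟩ := main a ha
    rw [le_div_iff₀ hnpos]
    have hq : Δ / (4 * L) * Real.sqrt Λ * (2 * L / Real.sqrt Λ) = Δ / 2 := by
      field_simp
      ring
    calc Δ / (4 * L) * Real.sqrt Λ * matNorm V⁻¹ (φ astar - φ a)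
        ≤ Δ / (4 * L) * Real.sqrt Λ * (2 * L / Real.sqrt Λ) := by
          apply mul_le_mul_of_nonneg_left hnle
          positivity
      _ = Δ / 2 := hq
      _ ≤ _ := h1
end

section
/- Let (Ω, F, P) be a probability space with a filtration (F_k)_{k≥0}, and for each k ≥ 1 let G_k be a σ-algebra with F_{k−1} ⊆ G_k ⊆ F_k. Let (f_k)_{k≥1}, (g_k)_{k≥1}, (y_k)_{k≥1} be real-valued random variables such that for each k: f_k and g_k are G_k-measurable, y_k is F_k-measurable, |f_k| ≤ 1, |g_k| ≤ 1, |y_k| ≤ 1 almost surely, and E[y_k | G_k] = g_k almost surely. Then for every integer t ≥ 1 and every δ ∈ (0,1), P( Σ_{k=1}^t (g_k − y_k)² > Σ_{k=1}^t (f_k − y_k)² + 40·log(4t/δ) − (1/2)·Σ_{k=1}^t E[(f_k − g_k)² | F_{k−1}] ) ≤ δ. -/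
open MeasureTheory

set_option linter.unusedSectionVars false
set_option maxHeartbeats 1000000

private noncomputable def Wf {Ω : Type*} {m0 : MeasurableSpace Ω} (P : Measure Ω)
    (F : Filtration ℕ m0) (f g : ℕ → Ω → ℝ) (k : ℕ) : Ω → ℝ :=
  P[fun ω' => (f k ω' - g k ω') ^ 2|F (k - 1)]

private noncomputable def Sf {Ω : Type*} {m0 : MeasurableSpace Ω} (P : Measure Ω)
    (F : Filtration ℕ m0) (f g y : ℕ → Ω → ℝ) (n : ℕ) (ω : Ω) : ℝ :=
  ∑ k ∈ Finset.Icc 1 n,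
    (1 / 40 : ℝ) * ((g k ω - y k ω) ^ 2 - (f k ω - y k ω) ^ 2 + 1 / 2 * Wf P F f g k ω)

section Aux
variable {Ω : Type*} {m0 : MeasurableSpace Ω} {P : Measure Ω} [IsProbabilityMeasure P]
  {F : Filtration ℕ m0} {G : ℕ → MeasurableSpace Ω} {f g y : ℕ → Ω → ℝ}

private lemma bint' {h : Ω → ℝ} (hm : AEStronglyMeasurable h P) {C : ℝ}
    (hb : ∀ᵐ ω ∂P, |h ω| ≤ C) : Integrable h P :=
  Integrable.mono' (integrable_const C) hm (by simpa [Real.norm_eq_abs] using hb)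

private lemma exp_quad {x : ℝ} (hx : |x| ≤ 1) : Real.exp x ≤ 1 + x + x ^ 2 := by
  have h := Real.exp_bound hx (n := 2) (by norm_num)
  rw [abs_sub_le_iff] at h
  have h1 := h.1
  simp [Finset.sum_range_succ] at h1
  nlinarith [sq_abs x, sq_nonneg x, abs_nonneg x]

private lemma aux_w {w : ℝ} (hw : 0 ≤ w) : Real.exp (w / 80) * (1 - 3 / 200 * w) ≤ 1 := by
  have h1 : 1 - 3 / 200 * w ≤ Real.exp (-(w / 80)) := by
    have h2 := Real.add_one_le_exp (-(w / 80))
    linarith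
  calc Real.exp (w / 80) * (1 - 3 / 200 * w)
      ≤ Real.exp (w / 80) * Real.exp (-(w / 80)) :=
        mul_le_mul_of_nonneg_left h1 (Real.exp_nonneg _)
    _ = 1 := by rw [← Real.exp_add]; simp

private lemma condZ (hG₂ : ∀ k, G k ≤ F k)
    (hfm : ∀ k, 1 ≤ k → Measurable[G k] (f k)) (hgm : ∀ k, 1 ≤ k → Measurable[G k] (g k))
    (hym : ∀ k, 1 ≤ k → Measurable[F k] (y k))
    (hfb : ∀ k, ∀ᵐ ω ∂P, |f k ω| ≤ 1) (hgb : ∀ k, ∀ᵐ ω ∂P, |g k ω| ≤ 1)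
    (hyb : ∀ k, ∀ᵐ ω ∂P, |y k ω| ≤ 1)
    (hcond : ∀ k, 1 ≤ k → P[y k|G k] =ᵐ[P] g k) {k : ℕ} (hk : 1 ≤ k) :
    P[fun ω => (f k ω - y k ω) ^ 2 - (g k ω - y k ω) ^ 2|G k] =ᵐ[P]
      fun ω => (f k ω - g k ω) ^ 2 := by
  have hGm0 : G k ≤ m0 := (hG₂ k).trans (F.le k)
  have hfM : Measurable (f k) := (hfm k hk).mono hGm0 le_rfl
  have hgM : Measurable (g k) := (hgm k hk).mono hGm0 le_rfl
  have hyM : Measurable (y k) := (hym k hk).mono (F.le k) le_rfl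
  set A : Ω → ℝ := fun ω => f k ω ^ 2 - g k ω ^ 2 with hA
  set B : Ω → ℝ := (fun ω => f k ω - g k ω) * y k with hB
  have hAint : Integrable A P := by
    refine bint' ((hfM.pow_const 2).sub (hgM.pow_const 2)).aestronglyMeasurable (C := 2) ?_
    filter_upwards [hfb k, hgb k] with ω h1 h2
    obtain ⟨u1, u2⟩ := abs_le.1 h1; obtain ⟨v1, v2⟩ := abs_le.1 h2
    simp only [hA]
    rw [abs_le]; constructor <;> nlinarith
  have hBint : Integrable B P := by
    refine bint' ((hfM.sub hgM).mul hyM).aestronglyMeasurable (C := 2) ?_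
    filter_upwards [hfb k, hgb k, hyb k] with ω h1 h2 h3
    have := abs_le.1 h1; have := abs_le.1 h2; have := abs_le.1 h3
    simp only [hB, Pi.mul_apply]
    rw [abs_mul]
    calc |f k ω - g k ω| * |y k ω| ≤ 2 * 1 := by
          apply mul_le_mul _ h3 (abs_nonneg _) (by norm_num)
          rw [abs_le]; constructor <;> linarith
      _ = 2 := by norm_num
  have hyint : Integrable (y k) P := by
    refine bint' hyM.aestronglyMeasurable (C := 1) (hyb k)
  have step1 : P[fun ω => (f k ω - y k ω) ^ 2 - (g k ω - y k ω) ^ 2|G k]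
      =ᵐ[P] P[A + (-2 : ℝ) • B|G k] := by
    apply condExp_congr_ae
    apply Filter.Eventually.of_forall
    intro ω
    simp only [hA, hB, Pi.add_apply, Pi.smul_apply, Pi.mul_apply, smul_eq_mul]
    ring
  have step2 : P[A + (-2 : ℝ) • B|G k] =ᵐ[P] P[A|G k] + P[(-2 : ℝ) • B|G k] :=
    condExp_add hAint (hBint.smul _) _
  have step3 : P[A|G k] = A :=
    condExp_of_stronglyMeasurable hGm0
      (((hfm k hk).pow_const 2).sub ((hgm k hk).pow_const 2)).stronglyMeasurable hAint
  have step4 : P[(-2 : ℝ) • B|G k] =ᵐ[P] (-2 : ℝ) • P[B|G k] := condExp_smul _ _ _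
  have step5 : P[B|G k] =ᵐ[P] (fun ω => f k ω - g k ω) * P[y k|G k] :=
    condExp_mul_of_stronglyMeasurable_left ((hfm k hk).sub (hgm k hk)).stronglyMeasurable hBint hyint
  have step6 : (fun ω => f k ω - g k ω) * P[y k|G k] =ᵐ[P] (fun ω => f k ω - g k ω) * g k :=
    Filter.EventuallyEq.mul (Filter.EventuallyEq.rfl) (hcond k hk)
  filter_upwards [step1, step2, step4, step5, step6] with ω e1 e2 e4 e5 e6
  rw [e1, e2, step3]
  simp only [Pi.add_apply, Pi.smul_apply, smul_eq_mul] at *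
  rw [e4, e5, e6]
  simp only [hA, Pi.mul_apply]
  ring

private lemma condZsq (hG₂ : ∀ k, G k ≤ F k)
    (hfm : ∀ k, 1 ≤ k → Measurable[G k] (f k)) (hgm : ∀ k, 1 ≤ k → Measurable[G k] (g k))
    (hym : ∀ k, 1 ≤ k → Measurable[F k] (y k))
    (hfb : ∀ k, ∀ᵐ ω ∂P, |f k ω| ≤ 1) (hgb : ∀ k, ∀ᵐ ω ∂P, |g k ω| ≤ 1)
    (hyb : ∀ k, ∀ᵐ ω ∂P, |y k ω| ≤ 1) {k : ℕ} (hk : 1 ≤ k) :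
    P[fun ω => ((f k ω - y k ω) ^ 2 - (g k ω - y k ω) ^ 2) ^ 2|G k] ≤ᵐ[P]
      fun ω => 16 * (f k ω - g k ω) ^ 2 := by
  have hGm0 : G k ≤ m0 := (hG₂ k).trans (F.le k)
  have hfM : Measurable (f k) := (hfm k hk).mono hGm0 le_rfl
  have hgM : Measurable (g k) := (hgm k hk).mono hGm0 le_rfl
  have hyM : Measurable (y k) := (hym k hk).mono (F.le k) le_rfl
  have hZsqint : Integrable (fun ω => ((f k ω - y k ω) ^ 2 - (g k ω - y k ω) ^ 2) ^ 2) P := by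
    refine bint' ((((hfM.sub hyM).pow_const 2).sub
      ((hgM.sub hyM).pow_const 2)).pow_const 2).aestronglyMeasurable (C := 64) ?_
    filter_upwards [hfb k, hgb k, hyb k] with ω h1 h2 h3
    obtain ⟨u1, u2⟩ := abs_le.1 h1; obtain ⟨v1, v2⟩ := abs_le.1 h2; obtain ⟨w1, w2⟩ := abs_le.1 h3
    have ha : (f k ω - y k ω) ^ 2 ≤ 4 := by nlinarith
    have hb : (g k ω - y k ω) ^ 2 ≤ 4 := by nlinarith
    have hc : ((f k ω - y k ω) ^ 2 - (g k ω - y k ω) ^ 2) ^ 2 ≤ 4 ^ 2 :=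
      sq_le_sq' (by nlinarith [sq_nonneg (f k ω - y k ω), sq_nonneg (g k ω - y k ω)])
        (by nlinarith [sq_nonneg (f k ω - y k ω), sq_nonneg (g k ω - y k ω)])
    rw [abs_le]; constructor <;> nlinarith [sq_nonneg ((f k ω - y k ω) ^ 2 - (g k ω - y k ω) ^ 2)]
  have hqint : Integrable (fun ω => 16 * (f k ω - g k ω) ^ 2) P := by
    refine bint' (((hfM.sub hgM).pow_const 2).const_mul 16).aestronglyMeasurable (C := 64) ?_
    filter_upwards [hfb k, hgb k] with ω h1 h2
    obtain ⟨u1, u2⟩ := abs_le.1 h1; obtain ⟨v1, v2⟩ := abs_le.1 h2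
    rw [abs_le]; constructor <;> nlinarith
  have hmono := condExp_mono (m := G k) (μ := P) hZsqint hqint ?_
  · have heq : P[fun ω => 16 * (f k ω - g k ω) ^ 2|G k] = fun ω => 16 * (f k ω - g k ω) ^ 2 :=
      condExp_of_stronglyMeasurable hGm0
        ((((hfm k hk).sub (hgm k hk)).pow_const 2).const_mul 16).stronglyMeasurable hqint
    rwa [heq] at hmono
  · filter_upwards [hfb k, hgb k, hyb k] with ω h1 h2 h3
    obtain ⟨u1, u2⟩ := abs_le.1 h1; obtain ⟨v1, v2⟩ := abs_le.1 h2; obtain ⟨w1, w2⟩ := abs_le.1 h3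
    have key : (f k ω - y k ω) ^ 2 - (g k ω - y k ω) ^ 2
        = (f k ω - g k ω) * (f k ω + g k ω - 2 * y k ω) := by ring
    have h4 : (f k ω + g k ω - 2 * y k ω) ^ 2 ≤ 16 := by nlinarith
    calc ((f k ω - y k ω) ^ 2 - (g k ω - y k ω) ^ 2) ^ 2
        = (f k ω - g k ω) ^ 2 * (f k ω + g k ω - 2 * y k ω) ^ 2 := by rw [key]; ring
      _ ≤ (f k ω - g k ω) ^ 2 * 16 := by
          exact mul_le_mul_of_nonneg_left h4 (sq_nonneg _)
      _ = 16 * (f k ω - g k ω) ^ 2 := by ring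

/-- key one-step exponential bound. -/
private lemma condExpStep (hG₂ : ∀ k, G k ≤ F k)
    (hfm : ∀ k, 1 ≤ k → Measurable[G k] (f k)) (hgm : ∀ k, 1 ≤ k → Measurable[G k] (g k))
    (hym : ∀ k, 1 ≤ k → Measurable[F k] (y k))
    (hfb : ∀ k, ∀ᵐ ω ∂P, |f k ω| ≤ 1) (hgb : ∀ k, ∀ᵐ ω ∂P, |g k ω| ≤ 1)
    (hyb : ∀ k, ∀ᵐ ω ∂P, |y k ω| ≤ 1)
    (hcond : ∀ k, 1 ≤ k → P[y k|G k] =ᵐ[P] g k) {k : ℕ} (hk : 1 ≤ k) :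
    P[fun ω => Real.exp (-(1 / 40) * ((f k ω - y k ω) ^ 2 - (g k ω - y k ω) ^ 2))|G k] ≤ᵐ[P]
      fun ω => 1 - 3 / 200 * (f k ω - g k ω) ^ 2 := by
  have hGm0 : G k ≤ m0 := (hG₂ k).trans (F.le k)
  have hfM : Measurable (f k) := (hfm k hk).mono hGm0 le_rfl
  have hgM : Measurable (g k) := (hgm k hk).mono hGm0 le_rfl
  have hyM : Measurable (y k) := (hym k hk).mono (F.le k) le_rfl
  have hZM : Measurable (fun ω => (f k ω - y k ω) ^ 2 - (g k ω - y k ω) ^ 2) :=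
    ((hfM.sub hyM).pow_const 2).sub ((hgM.sub hyM).pow_const 2)
  have hZbdd : ∀ᵐ ω ∂P, |((f k ω - y k ω) ^ 2 - (g k ω - y k ω) ^ 2)| ≤ 8 := by
    filter_upwards [hfb k, hgb k, hyb k] with ω h1 h2 h3
    obtain ⟨u1, u2⟩ := abs_le.1 h1; obtain ⟨v1, v2⟩ := abs_le.1 h2; obtain ⟨w1, w2⟩ := abs_le.1 h3
    rw [abs_le]; constructor <;> nlinarith
  have hZint : Integrable (fun ω => (f k ω - y k ω) ^ 2 - (g k ω - y k ω) ^ 2) P :=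
    bint' hZM.aestronglyMeasurable (by filter_upwards [hZbdd] with ω h using h)
  have hZsqint : Integrable (fun ω => ((f k ω - y k ω) ^ 2 - (g k ω - y k ω) ^ 2) ^ 2) P := by
    refine bint' (hZM.pow_const 2).aestronglyMeasurable (C := 64) ?_
    filter_upwards [hZbdd] with ω h
    obtain ⟨a1, a2⟩ := abs_le.1 h
    rw [abs_of_nonneg (sq_nonneg _)]
    nlinarith
  have hexpint : Integrable (fun ω => Real.exp (-(1 / 40) * ((f k ω - y k ω) ^ 2 - (g k ω - y k ω) ^ 2))) P := by
    refine bint' ((hZM.const_mul (-(1 / 40))).exp).aestronglyMeasurable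
      (C := Real.exp 1) ?_
    filter_upwards [hZbdd] with ω h
    obtain ⟨a1, a2⟩ := abs_le.1 h
    rw [abs_of_nonneg (Real.exp_nonneg _)]
    apply Real.exp_le_exp.2
    linarith
  have hpolyint : Integrable (fun ω => 1 + (-(1 / 40)) * ((f k ω - y k ω) ^ 2 - (g k ω - y k ω) ^ 2) + (1 / 1600) * ((f k ω - y k ω) ^ 2 - (g k ω - y k ω) ^ 2) ^ 2) P := by
    refine bint' (((measurable_const.add (hZM.const_mul _)).add
      ((hZM.pow_const 2).const_mul _)).aestronglyMeasurable) (C := 2) ?_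
    filter_upwards [hZbdd] with ω h
    obtain ⟨a1, a2⟩ := abs_le.1 h
    have hsq : ((f k ω - y k ω) ^ 2 - (g k ω - y k ω) ^ 2) ^ 2 ≤ 64 := by nlinarith
    rw [abs_le]
    constructor <;> nlinarith [sq_nonneg ((f k ω - y k ω) ^ 2 - (g k ω - y k ω) ^ 2)]
  have hmono : P[fun ω => Real.exp (-(1 / 40) * ((f k ω - y k ω) ^ 2 - (g k ω - y k ω) ^ 2))|G k] ≤ᵐ[P]
      P[fun ω => 1 + (-(1 / 40)) * ((f k ω - y k ω) ^ 2 - (g k ω - y k ω) ^ 2) + (1 / 1600) * ((f k ω - y k ω) ^ 2 - (g k ω - y k ω) ^ 2) ^ 2|G k] := by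
    refine condExp_mono hexpint hpolyint ?_
    filter_upwards [hZbdd] with ω h
    obtain ⟨a1, a2⟩ := abs_le.1 h
    have hx : |(-(1 / 40)) * ((f k ω - y k ω) ^ 2 - (g k ω - y k ω) ^ 2)| ≤ 1 := by
      rw [abs_mul]
      have h40 : |(-(1 / 40) : ℝ)| = 1 / 40 := by norm_num
      rw [h40]
      nlinarith [abs_nonneg ((f k ω - y k ω) ^ 2 - (g k ω - y k ω) ^ 2)]
    have hq := exp_quad hx
    calc Real.exp (-(1 / 40) * ((f k ω - y k ω) ^ 2 - (g k ω - y k ω) ^ 2))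
        ≤ 1 + (-(1 / 40)) * ((f k ω - y k ω) ^ 2 - (g k ω - y k ω) ^ 2) + ((-(1 / 40)) * ((f k ω - y k ω) ^ 2 - (g k ω - y k ω) ^ 2)) ^ 2 := hq
      _ = 1 + (-(1 / 40)) * ((f k ω - y k ω) ^ 2 - (g k ω - y k ω) ^ 2) + (1 / 1600) * ((f k ω - y k ω) ^ 2 - (g k ω - y k ω) ^ 2) ^ 2 := by ring
  have hdecomp : P[fun ω => 1 + (-(1 / 40)) * ((f k ω - y k ω) ^ 2 - (g k ω - y k ω) ^ 2) + (1 / 1600) * ((f k ω - y k ω) ^ 2 - (g k ω - y k ω) ^ 2) ^ 2|G k] =ᵐ[P]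
      (fun _ => (1 : ℝ)) + ((-(1 / 40) : ℝ) • P[(fun ω => (f k ω - y k ω) ^ 2 - (g k ω - y k ω) ^ 2)|G k]
        + (1 / 1600 : ℝ) • P[fun ω => ((f k ω - y k ω) ^ 2 - (g k ω - y k ω) ^ 2) ^ 2|G k]) := by
    have e0 : (fun ω => 1 + (-(1 / 40)) * ((f k ω - y k ω) ^ 2 - (g k ω - y k ω) ^ 2) + (1 / 1600) * ((f k ω - y k ω) ^ 2 - (g k ω - y k ω) ^ 2) ^ 2)
        = (fun _ => (1 : ℝ)) + ((-(1 / 40) : ℝ) • (fun ω => (f k ω - y k ω) ^ 2 - (g k ω - y k ω) ^ 2)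
          + (1 / 1600 : ℝ) • fun ω => ((f k ω - y k ω) ^ 2 - (g k ω - y k ω) ^ 2) ^ 2) := by
      funext ω
      simp only [Pi.add_apply, Pi.smul_apply, smul_eq_mul]
      ring
    rw [e0]
    refine (condExp_add (integrable_const 1) ((hZint.smul _).add (hZsqint.smul _)) _).trans ?_
    have e1 : P[fun _ => (1 : ℝ)|G k] = fun _ => (1 : ℝ) := condExp_const hGm0 1
    rw [e1]
    refine Filter.EventuallyEq.add (Filter.EventuallyEq.rfl) ?_
    refine ((condExp_add (hZint.smul _) (hZsqint.smul _) _).trans ?_)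
    exact Filter.EventuallyEq.add (condExp_smul _ _ _) (condExp_smul _ _ _)
  have h1 := condZ hG₂ hfm hgm hym hfb hgb hyb hcond hk
  have h2 := condZsq hG₂ hfm hgm hym hfb hgb hyb hk
  filter_upwards [hmono, hdecomp, h1, h2] with ω e1 e2 e3 e4
  calc (P[fun ω => Real.exp (-(1 / 40) * ((f k ω - y k ω) ^ 2 - (g k ω - y k ω) ^ 2))|G k]) ω
      ≤ (P[fun ω => 1 + (-(1 / 40)) * ((f k ω - y k ω) ^ 2 - (g k ω - y k ω) ^ 2) + (1 / 1600) * ((f k ω - y k ω) ^ 2 - (g k ω - y k ω) ^ 2) ^ 2|G k]) ω := e1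
    _ = 1 + (-(1 / 40)) * (P[(fun ω => (f k ω - y k ω) ^ 2 - (g k ω - y k ω) ^ 2)|G k]) ω
        + (1 / 1600) * (P[fun ω => ((f k ω - y k ω) ^ 2 - (g k ω - y k ω) ^ 2) ^ 2|G k]) ω := by
        rw [e2]; simp only [Pi.add_apply, Pi.smul_apply, smul_eq_mul]; ring
    _ ≤ 1 - 3 / 200 * (f k ω - g k ω) ^ 2 := by linarith


private lemma Wbdd (hG₂ : ∀ k, G k ≤ F k)
    (hfm : ∀ k, 1 ≤ k → Measurable[G k] (f k)) (hgm : ∀ k, 1 ≤ k → Measurable[G k] (g k))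
    (hfb : ∀ k, ∀ᵐ ω ∂P, |f k ω| ≤ 1) (hgb : ∀ k, ∀ᵐ ω ∂P, |g k ω| ≤ 1)
    {k : ℕ} (hk : 1 ≤ k) :
    ∀ᵐ ω ∂P, 0 ≤ Wf P F f g k ω ∧ Wf P F f g k ω ≤ 4 := by
  have hGm0 : G k ≤ m0 := (hG₂ k).trans (F.le k)
  have hfM : Measurable (f k) := (hfm k hk).mono hGm0 le_rfl
  have hgM : Measurable (g k) := (hgm k hk).mono hGm0 le_rfl
  have hqint : Integrable (fun ω => (f k ω - g k ω) ^ 2) P := by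
    refine bint' ((hfM.sub hgM).pow_const 2).aestronglyMeasurable (C := 4) ?_
    filter_upwards [hfb k, hgb k] with ω h1 h2
    obtain ⟨u1, u2⟩ := abs_le.1 h1; obtain ⟨v1, v2⟩ := abs_le.1 h2
    rw [abs_of_nonneg (sq_nonneg _)]
    nlinarith
  have h0 : (0 : Ω → ℝ) ≤ᵐ[P] Wf P F f g k :=
    condExp_nonneg (Filter.Eventually.of_forall fun ω => sq_nonneg _)
  have h4 : Wf P F f g k ≤ᵐ[P] fun _ => (4 : ℝ) := by
    have h := condExp_mono (m := F (k - 1)) (μ := P) hqint (integrable_const 4) ?_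
    · unfold Wf
      rwa [condExp_const (F.le (k - 1))] at h
    · filter_upwards [hfb k, hgb k] with ω h1 h2
      obtain ⟨u1, u2⟩ := abs_le.1 h1; obtain ⟨v1, v2⟩ := abs_le.1 h2
      nlinarith
  filter_upwards [h0, h4] with ω u v using ⟨u, v⟩

private lemma master (hG₂ : ∀ k, G k ≤ F k)
    (hfm : ∀ k, 1 ≤ k → Measurable[G k] (f k)) (hgm : ∀ k, 1 ≤ k → Measurable[G k] (g k))
    (hfb : ∀ k, ∀ᵐ ω ∂P, |f k ω| ≤ 1) (hgb : ∀ k, ∀ᵐ ω ∂P, |g k ω| ≤ 1)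
    (hyb : ∀ k, ∀ᵐ ω ∂P, |y k ω| ≤ 1) :
    ∀ᵐ ω ∂P, ∀ k, 1 ≤ k → (|f k ω| ≤ 1 ∧ |g k ω| ≤ 1 ∧ |y k ω| ≤ 1 ∧
      0 ≤ Wf P F f g k ω ∧ Wf P F f g k ω ≤ 4) := by
  rw [MeasureTheory.ae_all_iff]
  intro k
  by_cases hk : 1 ≤ k
  · filter_upwards [hfb k, hgb k, hyb k, Wbdd hG₂ hfm hgm hfb hgb hk] with ω u1 u2 u3 u4
    exact fun _ => ⟨u1, u2, u3, u4.1, u4.2⟩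
  · filter_upwards with ω
    exact fun h => absurd h hk

private lemma SmeasF (hG₂ : ∀ k, G k ≤ F k)
    (hfm : ∀ k, 1 ≤ k → Measurable[G k] (f k)) (hgm : ∀ k, 1 ≤ k → Measurable[G k] (g k))
    (hym : ∀ k, 1 ≤ k → Measurable[F k] (y k)) (n : ℕ) :
    Measurable[F n] (Sf P F f g y n) := by
  unfold Sf
  apply Finset.measurable_sum
  intro k hk
  obtain ⟨hk1, hk2⟩ := Finset.mem_Icc.1 hk
  have hfk : Measurable[F n] (f k) := (hfm k hk1).mono ((hG₂ k).trans (F.mono hk2)) le_rfl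
  have hgk : Measurable[F n] (g k) := (hgm k hk1).mono ((hG₂ k).trans (F.mono hk2)) le_rfl
  have hyk : Measurable[F n] (y k) := (hym k hk1).mono (F.mono hk2) le_rfl
  have hWk : Measurable[F n] (Wf P F f g k) := by
    have h1 : StronglyMeasurable[F (k - 1)] (Wf P F f g k) := stronglyMeasurable_condExp
    exact h1.measurable.mono (F.mono ((Nat.sub_le k 1).trans hk2)) le_rfl
  exact ((((hgk.sub hyk).pow_const 2).sub ((hfk.sub hyk).pow_const 2)).add
    (hWk.const_mul _)).const_mul _

private lemma Sbdd (hG₂ : ∀ k, G k ≤ F k)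
    (hfm : ∀ k, 1 ≤ k → Measurable[G k] (f k)) (hgm : ∀ k, 1 ≤ k → Measurable[G k] (g k))
    (hfb : ∀ k, ∀ᵐ ω ∂P, |f k ω| ≤ 1) (hgb : ∀ k, ∀ᵐ ω ∂P, |g k ω| ≤ 1)
    (hyb : ∀ k, ∀ᵐ ω ∂P, |y k ω| ≤ 1) (n : ℕ) :
    ∀ᵐ ω ∂P, |Sf P F f g y n ω| ≤ (n : ℝ) / 4 := by
  filter_upwards [master hG₂ hfm hgm hfb hgb hyb] with ω hM
  unfold Sf
  calc |∑ k ∈ Finset.Icc 1 n,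
      (1 / 40 : ℝ) * ((g k ω - y k ω) ^ 2 - (f k ω - y k ω) ^ 2 + 1 / 2 * Wf P F f g k ω)|
      ≤ ∑ k ∈ Finset.Icc 1 n,
        |(1 / 40 : ℝ) * ((g k ω - y k ω) ^ 2 - (f k ω - y k ω) ^ 2 + 1 / 2 * Wf P F f g k ω)| :=
        Finset.abs_sum_le_sum_abs _ _
    _ ≤ ∑ _k ∈ Finset.Icc 1 n, (1 / 4 : ℝ) := by
        apply Finset.sum_le_sum
        intro k hk
        obtain ⟨hk1, hk2⟩ := Finset.mem_Icc.1 hk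
        obtain ⟨u1, u2, u3, u4, u5⟩ := hM k hk1
        obtain ⟨a1, a2⟩ := abs_le.1 u1; obtain ⟨b1, b2⟩ := abs_le.1 u2
        obtain ⟨c1, c2⟩ := abs_le.1 u3
        rw [abs_le]; constructor <;> nlinarith
    _ ≤ (n : ℝ) / 4 := by
        rw [Finset.sum_const, Nat.card_Icc, nsmul_eq_mul]
        have h : ((n + 1 - 1 : ℕ) : ℝ) = (n : ℝ) := by simp
        rw [h]
        linarith

private lemma Sint (hG₂ : ∀ k, G k ≤ F k)
    (hfm : ∀ k, 1 ≤ k → Measurable[G k] (f k)) (hgm : ∀ k, 1 ≤ k → Measurable[G k] (g k))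
    (hym : ∀ k, 1 ≤ k → Measurable[F k] (y k))
    (hfb : ∀ k, ∀ᵐ ω ∂P, |f k ω| ≤ 1) (hgb : ∀ k, ∀ᵐ ω ∂P, |g k ω| ≤ 1)
    (hyb : ∀ k, ∀ᵐ ω ∂P, |y k ω| ≤ 1) (n : ℕ) :
    Integrable (fun ω => Real.exp (Sf P F f g y n ω)) P := by
  refine bint' (((SmeasF hG₂ hfm hgm hym n).mono (F.le n) le_rfl).exp).aestronglyMeasurable
    (C := Real.exp ((n : ℝ) / 4)) ?_
  filter_upwards [Sbdd hG₂ hfm hgm hfb hgb hyb n] with ω h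
  rw [abs_of_nonneg (Real.exp_nonneg _)]
  exact Real.exp_le_exp.2 (abs_le.1 h).2

private lemma key (hG₁ : ∀ k, 1 ≤ k → F (k - 1) ≤ G k) (hG₂ : ∀ k, G k ≤ F k)
    (hfm : ∀ k, 1 ≤ k → Measurable[G k] (f k)) (hgm : ∀ k, 1 ≤ k → Measurable[G k] (g k))
    (hym : ∀ k, 1 ≤ k → Measurable[F k] (y k))
    (hfb : ∀ k, ∀ᵐ ω ∂P, |f k ω| ≤ 1) (hgb : ∀ k, ∀ᵐ ω ∂P, |g k ω| ≤ 1)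
    (hyb : ∀ k, ∀ᵐ ω ∂P, |y k ω| ≤ 1)
    (hcond : ∀ k, 1 ≤ k → P[y k|G k] =ᵐ[P] g k) :
    ∀ n, ∫ ω, Real.exp (Sf P F f g y n ω) ∂P ≤ 1 := by
  intro n
  induction n with
  | zero =>
    have h0 : Sf P F f g y 0 = fun _ => 0 := by
      funext ω; unfold Sf; simp
    rw [h0]
    simp
  | succ n ih =>
    have hGm : G (n + 1) ≤ m0 := (hG₂ (n + 1)).trans (F.le (n + 1))
    have hk1 : 1 ≤ n + 1 := Nat.le_add_left 1 n
    have hfM : Measurable (f (n + 1)) := (hfm _ hk1).mono hGm le_rfl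
    have hgM : Measurable (g (n + 1)) := (hgm _ hk1).mono hGm le_rfl
    have hyM : Measurable (y (n + 1)) := (hym _ hk1).mono (F.le _) le_rfl
    have hWsm : StronglyMeasurable[F n] (Wf P F f g (n + 1)) := stronglyMeasurable_condExp
    have hWM : Measurable (Wf P F f g (n + 1)) := hWsm.measurable.mono (F.le n) le_rfl
    have hSm0 : Measurable (Sf P F f g y n) :=
      (SmeasF hG₂ hfm hgm hym n).mono (F.le n) le_rfl
    -- the three building blocks
    set φ : Ω → ℝ := fun ω => Real.exp (Sf P F f g y n ω + 1 / 80 * Wf P F f g (n + 1) ω)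
      with hφdef
    set E : Ω → ℝ := fun ω => Real.exp (-(1 / 40) * ((f (n + 1) ω - y (n + 1) ω) ^ 2 - (g (n + 1) ω - y (n + 1) ω) ^ 2)) with hEdef
    set q : Ω → ℝ := fun ω => (f (n + 1) ω - g (n + 1) ω) ^ 2 with hqdef
    clear_value φ E q
    have hφ0 : ∀ ω, 0 ≤ φ ω := fun ω => by simp only [hφdef]; positivity
    have hφM : Measurable φ := by
      rw [hφdef]; exact (hSm0.add (hWM.const_mul _)).exp
    have hφFn : Measurable[F n] φ := by
      rw [hφdef]
      exact (((SmeasF hG₂ hfm hgm hym n).add (hWsm.measurable.const_mul _))).exp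
    have hφG : StronglyMeasurable[G (n + 1)] φ :=
      (hφFn.mono (hG₁ (n + 1) hk1) le_rfl).stronglyMeasurable
    have hEM : Measurable E := by
      rw [hEdef]
      exact ((((hfM.sub hyM).pow_const 2).sub ((hgM.sub hyM).pow_const 2)).const_mul _).exp
    have hqM : Measurable q := by
      rw [hqdef]; exact (hfM.sub hgM).pow_const 2
    -- a.e. bounds
    have hφbdd : ∀ᵐ ω ∂P, |φ ω| ≤ Real.exp ((n : ℝ) / 4 + 1) := by
      filter_upwards [Sbdd hG₂ hfm hgm hfb hgb hyb n,
        master hG₂ hfm hgm hfb hgb hyb] with ω h1 h2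
      obtain ⟨-, -, -, w0, w4⟩ := h2 (n + 1) hk1
      simp only [hφdef]
      rw [abs_of_nonneg (Real.exp_nonneg _)]
      apply Real.exp_le_exp.2
      have := (abs_le.1 h1).2
      linarith
    have hEbdd : ∀ᵐ ω ∂P, |E ω| ≤ Real.exp 1 := by
      filter_upwards [master hG₂ hfm hgm hfb hgb hyb] with ω h2
      obtain ⟨u1, u2, u3, -, -⟩ := h2 (n + 1) hk1
      obtain ⟨a1, a2⟩ := abs_le.1 u1; obtain ⟨b1, b2⟩ := abs_le.1 u2
      obtain ⟨c1, c2⟩ := abs_le.1 u3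
      simp only [hEdef]
      rw [abs_of_nonneg (Real.exp_nonneg _)]
      apply Real.exp_le_exp.2
      nlinarith
    have hqbdd : ∀ᵐ ω ∂P, |q ω| ≤ 4 := by
      filter_upwards [master hG₂ hfm hgm hfb hgb hyb] with ω h2
      obtain ⟨u1, u2, -, -, -⟩ := h2 (n + 1) hk1
      obtain ⟨a1, a2⟩ := abs_le.1 u1; obtain ⟨b1, b2⟩ := abs_le.1 u2
      simp only [hqdef]
      rw [abs_of_nonneg (sq_nonneg _)]
      nlinarith
    -- integrability
    have hφint : Integrable φ P := bint' hφM.aestronglyMeasurable hφbdd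
    have hEint : Integrable E P := bint' hEM.aestronglyMeasurable hEbdd
    have hφEint : Integrable (φ * E) P := by
      refine bint' (hφM.mul hEM).aestronglyMeasurable
        (C := Real.exp ((n : ℝ) / 4 + 1) * Real.exp 1) ?_
      filter_upwards [hφbdd, hEbdd] with ω h1 h2
      rw [Pi.mul_apply, abs_mul]
      exact mul_le_mul h1 h2 (abs_nonneg _) (Real.exp_nonneg _)
    have hφqint : Integrable (φ * q) P := by
      refine bint' (hφM.mul hqM).aestronglyMeasurable
        (C := Real.exp ((n : ℝ) / 4 + 1) * 4) ?_
      filter_upwards [hφbdd, hqbdd] with ω h1 h2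
      rw [Pi.mul_apply, abs_mul]
      exact mul_le_mul h1 h2 (abs_nonneg _) (Real.exp_nonneg _)
    have hqint : Integrable q P := bint' hqM.aestronglyMeasurable hqbdd
    -- pointwise expansion
    have hexpand : ∀ ω, Real.exp (Sf P F f g y (n + 1) ω) = (φ * E) ω := by
      intro ω
      rw [Pi.mul_apply]
      simp only [hφdef, hEdef]
      rw [← Real.exp_add]
      unfold Sf
      rw [Finset.sum_Icc_succ_top hk1]
      congr 1
      ring
    -- the chain
    have step1 : ∫ ω, Real.exp (Sf P F f g y (n + 1) ω) ∂P = ∫ ω, (φ * E) ω ∂P :=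
      integral_congr_ae (Filter.Eventually.of_forall hexpand)
    have step2 : ∫ ω, (φ * E) ω ∂P = ∫ ω, (P[φ * E|G (n + 1)]) ω ∂P :=
      (integral_condExp hGm).symm
    have step3 : ∫ ω, (P[φ * E|G (n + 1)]) ω ∂P = ∫ ω, (φ * P[E|G (n + 1)]) ω ∂P :=
      integral_congr_ae (condExp_mul_of_stronglyMeasurable_left hφG hφEint hEint)
    have hcstep := condExpStep (P := P) hG₂ hfm hgm hym hfb hgb hyb hcond hk1
    have int1 : Integrable (fun ω => φ ω * (P[E|G (n + 1)]) ω) P := by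
      refine integrable_condExp.bdd_mul hφM.aestronglyMeasurable (c := Real.exp ((n : ℝ) / 4 + 1)) ?_
      filter_upwards [hφbdd] with ω h using h
    have int2 : Integrable (fun ω => φ ω * (1 - 3 / 200 * q ω)) P := by
      refine bint' (hφM.mul (measurable_const.sub (hqM.const_mul _))).aestronglyMeasurable
        (C := Real.exp ((n : ℝ) / 4 + 1) * 1) ?_
      filter_upwards [hφbdd, hqbdd] with ω h1 h2
      rw [abs_mul]
      refine mul_le_mul h1 ?_ (abs_nonneg _) (Real.exp_nonneg _)
      have hq0 : 0 ≤ q ω := by simp only [hqdef]; positivity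
      obtain ⟨d1, d2⟩ := abs_le.1 h2
      rw [abs_le]; constructor <;> nlinarith
    have step4 : ∫ ω, (φ * P[E|G (n + 1)]) ω ∂P ≤ ∫ ω, φ ω * (1 - 3 / 200 * q ω) ∂P := by
      refine integral_mono_ae int1 int2 ?_
      filter_upwards [hcstep] with ω h
      rw [Pi.mul_apply]
      simp only [hEdef, hqdef]
      exact mul_le_mul_of_nonneg_left h (hφ0 ω)
    have int3 : Integrable (φ * Wf P F f g (n + 1)) P := by
      refine bint' (hφM.mul hWM).aestronglyMeasurable
        (C := Real.exp ((n : ℝ) / 4 + 1) * 4) ?_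
      filter_upwards [hφbdd, master hG₂ hfm hgm hfb hgb hyb] with ω h1 h2
      obtain ⟨-, -, -, w0, w4⟩ := h2 (n + 1) hk1
      rw [Pi.mul_apply, abs_mul]
      refine mul_le_mul h1 ?_ (abs_nonneg _) (Real.exp_nonneg _)
      rw [abs_of_nonneg w0]; exact w4
    have hqW : ∫ ω, (φ * q) ω ∂P = ∫ ω, (φ * Wf P F f g (n + 1)) ω ∂P := by
      have e1 : ∫ ω, (φ * q) ω ∂P = ∫ ω, (P[φ * q|F n]) ω ∂P := (integral_condExp (F.le n)).symm
      have e2 : ∫ ω, (P[φ * q|F n]) ω ∂P = ∫ ω, (φ * P[q|F n]) ω ∂P :=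
        integral_congr_ae (condExp_mul_of_stronglyMeasurable_left hφFn.stronglyMeasurable hφqint hqint)
      have e3 : P[q|F n] = Wf P F f g (n + 1) := by rw [hqdef]; rfl
      rw [e1, e2, e3]
    have step5 : ∫ ω, φ ω * (1 - 3 / 200 * q ω) ∂P
        = ∫ ω, φ ω * (1 - 3 / 200 * Wf P F f g (n + 1) ω) ∂P := by
      have d1 : ∫ ω, φ ω * (1 - 3 / 200 * q ω) ∂P
          = ∫ ω, φ ω ∂P - 3 / 200 * ∫ ω, (φ * q) ω ∂P := by
        rw [← integral_const_mul, ← integral_sub hφint (hφqint.const_mul _)]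
        apply integral_congr_ae
        filter_upwards with ω
        rw [Pi.mul_apply]
        ring
      have d2 : ∫ ω, φ ω * (1 - 3 / 200 * Wf P F f g (n + 1) ω) ∂P
          = ∫ ω, φ ω ∂P - 3 / 200 * ∫ ω, (φ * Wf P F f g (n + 1)) ω ∂P := by
        rw [← integral_const_mul, ← integral_sub hφint (int3.const_mul _)]
        apply integral_congr_ae
        filter_upwards with ω
        rw [Pi.mul_apply]
        ring
      rw [d1, d2, hqW]
    have int4 : Integrable (fun ω => φ ω * (1 - 3 / 200 * Wf P F f g (n + 1) ω)) P := by
      refine bint' (hφM.mul (measurable_const.sub (hWM.const_mul _))).aestronglyMeasurable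
        (C := Real.exp ((n : ℝ) / 4 + 1) * 1) ?_
      filter_upwards [hφbdd, master hG₂ hfm hgm hfb hgb hyb] with ω h1 h2
      obtain ⟨-, -, -, w0, w4⟩ := h2 (n + 1) hk1
      rw [abs_mul]
      refine mul_le_mul h1 ?_ (abs_nonneg _) (Real.exp_nonneg _)
      rw [abs_le]; constructor <;> nlinarith
    have step6 : ∫ ω, φ ω * (1 - 3 / 200 * Wf P F f g (n + 1) ω) ∂P
        ≤ ∫ ω, Real.exp (Sf P F f g y n ω) ∂P := by
      refine integral_mono_ae int4 (Sint hG₂ hfm hgm hym hfb hgb hyb n) ?_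
      filter_upwards [master hG₂ hfm hgm hfb hgb hyb] with ω h2
      obtain ⟨-, -, -, w0, w4⟩ := h2 (n + 1) hk1
      have hφω : φ ω = Real.exp (Sf P F f g y n ω) *
          Real.exp (Wf P F f g (n + 1) ω / 80) := by
        simp only [hφdef]
        rw [← Real.exp_add]
        congr 1
        ring
      rw [hφω, mul_assoc]
      calc Real.exp (Sf P F f g y n ω) *
          (Real.exp (Wf P F f g (n + 1) ω / 80) * (1 - 3 / 200 * Wf P F f g (n + 1) ω))
          ≤ Real.exp (Sf P F f g y n ω) * 1 :=
            mul_le_mul_of_nonneg_left (aux_w w0) (Real.exp_nonneg _)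
        _ = Real.exp (Sf P F f g y n ω) := mul_one _
    calc ∫ ω, Real.exp (Sf P F f g y (n + 1) ω) ∂P
        = ∫ ω, (φ * E) ω ∂P := step1
      _ = ∫ ω, (P[φ * E|G (n + 1)]) ω ∂P := step2
      _ = ∫ ω, (φ * P[E|G (n + 1)]) ω ∂P := step3
      _ ≤ ∫ ω, φ ω * (1 - 3 / 200 * q ω) ∂P := step4
      _ = ∫ ω, φ ω * (1 - 3 / 200 * Wf P F f g (n + 1) ω) ∂P := step5
      _ ≤ ∫ ω, Real.exp (Sf P F f g y n ω) ∂P := step6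
      _ ≤ 1 := ih

end Aux

/-- Single-model MSE concentration (extension of Agarwal et al. Lemma 4.1): with probability
at most `δ`, the empirical MSE of the realizable model `g` exceeds that of any fixed model `f`
by more than `40 log(4t/δ)` minus half the sum of conditional mean prediction errors. -/
theorem mse_concentration_single
    {Ω : Type*} {m0 : MeasurableSpace Ω} (P : Measure Ω) [IsProbabilityMeasure P]
    (F : Filtration ℕ m0) (G : ℕ → MeasurableSpace Ω)
    (hG₁ : ∀ k, 1 ≤ k → F (k - 1) ≤ G k) (hG₂ : ∀ k, G k ≤ F k)
    (f g y : ℕ → Ω → ℝ)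
    (hfm : ∀ k, 1 ≤ k → Measurable[G k] (f k))
    (hgm : ∀ k, 1 ≤ k → Measurable[G k] (g k))
    (hym : ∀ k, 1 ≤ k → Measurable[F k] (y k))
    (hfb : ∀ k, ∀ᵐ ω ∂P, |f k ω| ≤ 1)
    (hgb : ∀ k, ∀ᵐ ω ∂P, |g k ω| ≤ 1)
    (hyb : ∀ k, ∀ᵐ ω ∂P, |y k ω| ≤ 1)
    (hcond : ∀ k, 1 ≤ k → P[y k|G k] =ᵐ[P] g k)
    (t : ℕ) (ht : 1 ≤ t) (δ : ℝ) (hδ : δ ∈ Set.Ioo (0 : ℝ) 1) :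
    P {ω | ∑ k ∈ Finset.Icc 1 t, (g k ω - y k ω) ^ 2 >
        ∑ k ∈ Finset.Icc 1 t, (f k ω - y k ω) ^ 2 + 40 * Real.log (4 * t / δ)
          - (1 / 2) * ∑ k ∈ Finset.Icc 1 t,
              (P[fun ω' => (f k ω' - g k ω') ^ 2|F (k - 1)]) ω} ≤ ENNReal.ofReal δ := by
  obtain ⟨hδ0, hδ1⟩ := hδ
  have ht1 : (1 : ℝ) ≤ (t : ℝ) := by exact_mod_cast ht
  have hc : (0 : ℝ) < 4 * (t : ℝ) / δ := by positivity
  -- the event is contained in a superlevel set of the exponential supermartingale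
  have hsub : {ω | ∑ k ∈ Finset.Icc 1 t, (g k ω - y k ω) ^ 2 >
        ∑ k ∈ Finset.Icc 1 t, (f k ω - y k ω) ^ 2 + 40 * Real.log (4 * t / δ)
          - (1 / 2) * ∑ k ∈ Finset.Icc 1 t,
              (P[fun ω' => (f k ω' - g k ω') ^ 2|F (k - 1)]) ω}
      ⊆ {ω | 4 * (t : ℝ) / δ ≤ Real.exp (Sf P F f g y t ω)} := by
    intro ω hω
    simp only [Set.mem_setOf_eq] at hω ⊢
    have e1 : Sf P F f g y t ω
        = 1 / 40 * ((∑ k ∈ Finset.Icc 1 t, (g k ω - y k ω) ^ 2)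
          - (∑ k ∈ Finset.Icc 1 t, (f k ω - y k ω) ^ 2)
          + 1 / 2 * ∑ k ∈ Finset.Icc 1 t,
              (P[fun ω' => (f k ω' - g k ω') ^ 2|F (k - 1)]) ω) := by
      unfold Sf Wf
      rw [Finset.mul_sum]
      rw [← Finset.sum_sub_distrib, ← Finset.sum_add_distrib, Finset.mul_sum]
    have hlog : Real.log (4 * (t : ℝ) / δ) < Sf P F f g y t ω := by
      rw [e1]
      linarith
    calc 4 * (t : ℝ) / δ = Real.exp (Real.log (4 * (t : ℝ) / δ)) := (Real.exp_log hc).symm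
      _ ≤ Real.exp (Sf P F f g y t ω) := Real.exp_le_exp.2 hlog.le
  have hmark := mul_meas_ge_le_integral_of_nonneg (μ := P)
    (f := fun ω => Real.exp (Sf P F f g y t ω))
    (Filter.Eventually.of_forall fun ω => Real.exp_nonneg _)
    (Sint hG₂ hfm hgm hym hfb hgb hyb t) (4 * (t : ℝ) / δ)
  have hkey := key hG₁ hG₂ hfm hgm hym hfb hgb hyb hcond t
  have h1 : 4 * (t : ℝ) / δ *
      (P {ω | 4 * (t : ℝ) / δ ≤ Real.exp (Sf P F f g y t ω)}).toReal ≤ 1 :=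
    le_trans hmark hkey
  have h3 : (P {ω | 4 * (t : ℝ) / δ ≤ Real.exp (Sf P F f g y t ω)}).toReal ≤ δ / (4 * t) := by
    rw [le_div_iff₀ (by positivity : (0 : ℝ) < 4 * (t : ℝ))]
    have h4 : δ * (4 * (t : ℝ) / δ) = 4 * (t : ℝ) := by field_simp
    nlinarith [ENNReal.toReal_nonneg
      (a := P {ω | 4 * (t : ℝ) / δ ≤ Real.exp (Sf P F f g y t ω)})]
  calc P {ω | ∑ k ∈ Finset.Icc 1 t, (g k ω - y k ω) ^ 2 >
        ∑ k ∈ Finset.Icc 1 t, (f k ω - y k ω) ^ 2 + 40 * Real.log (4 * t / δ)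
          - (1 / 2) * ∑ k ∈ Finset.Icc 1 t,
              (P[fun ω' => (f k ω' - g k ω') ^ 2|F (k - 1)]) ω}
      ≤ P {ω | 4 * (t : ℝ) / δ ≤ Real.exp (Sf P F f g y t ω)} := measure_mono hsub
    _ = ENNReal.ofReal
        ((P {ω | 4 * (t : ℝ) / δ ≤ Real.exp (Sf P F f g y t ω)}).toReal) :=
        (ENNReal.ofReal_toReal (measure_ne_top P _)).symm
    _ ≤ ENNReal.ofReal (δ / (4 * t)) := ENNReal.ofReal_le_ofReal h3
    _ ≤ ENNReal.ofReal δ := by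
        apply ENNReal.ofReal_le_ofReal
        apply div_le_self hδ0.le
        linarith
end
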